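/- Suppose each f_i : ℝ^d → ℝ (i = 1,…,n, n ≥ 2) is convex and Λ-smooth, with w_* a global minimizer of F(w) = (1/n) ∑_{i=1}^n f_i(w), and 1 ≤ b ≤ n. Set β(b) = (n−b)/(b(n−1)) and N = (2/n) ∑_{i=1}^n ‖∇f_i(w_*)‖². Then for every w ∈ ℝ^d, the uniform average over all size-b subsets S of {1,…,n} satisfies E_S[‖∇F^S(w)‖²] ≤ 4 β(b) Λ (F(w) − F(w_*)) + 2‖∇F(w)‖² + N. -/

import Mathlib

/-!
Expanding `‖∑ i ∈ S, g i‖²` into inner products and counting the `b`-subsets that contain one,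
resp. two, prescribed indices gives the exact formula for sampling without replacement:
`E_S ‖b⁻¹ ∑ i ∈ S, g i‖² = β * (1/n) ∑ ‖g i‖² + (1 - β) * ‖(1/n) ∑ g i‖²`.
As `0 ≤ β ≤ 1`, it remains to bound `(1/n) ∑ ‖∇f_i(w)‖²`. A convex `Λ`-smooth `f` has a
cocoercive gradient, `‖∇f x - ∇f y‖² ≤ 2Λ (f x - f y - ⟪∇f y, x - y⟫)`; summing this over `i`
at `y = w_*`, where `∑ ∇f_i(w_*) = 0`, gives
`∑ ‖∇f_i(w)‖² ≤ 4Λ n (F w - F w_*) + 2 ∑ ‖∇f_i(w_*)‖²`.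
-/

open scoped RealInnerProductSpace
open Finset

section Smooth

variable {E : Type*} [NormedAddCommGroup E] [InnerProductSpace ℝ E] [CompleteSpace E]

def GradientLipschitzWith (Λ : ℝ) (f : E → ℝ) : Prop :=
  ∀ x y : E, ‖gradient f y - gradient f x‖ ≤ Λ * ‖y - x‖

theorem DifferentiableAt.hasDerivAt_comp_add_smul {f : E → ℝ} {x v : E} {t : ℝ}
    (hf : DifferentiableAt ℝ f (x + t • v)) :
    HasDerivAt (fun s : ℝ => f (x + s • v)) ⟪gradient f (x + t • v), v⟫ t := by
  have hline : HasDerivAt (fun s : ℝ => x + s • v) v t := by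
    simpa using ((hasDerivAt_id t).smul_const v).const_add x
  have := hf.hasFDerivAt.comp_hasDerivAt t hline
  rwa [← inner_gradient_left] at this

theorem ConvexOn.add_inner_gradient_le {f : E → ℝ} (hc : ConvexOn ℝ Set.univ f) {x : E}
    (hf : DifferentiableAt ℝ f x) (y : E) :
    f x + ⟪gradient f x, y - x⟫ ≤ f y := by
  have hφ : ConvexOn ℝ Set.univ (fun t : ℝ => f (x + t • (y - x))) := by
    simpa [Function.comp_def, AffineMap.lineMap_apply, add_comm] using
      hc.comp_affineMap (AffineMap.lineMap x y)
  have hderiv : HasDerivAt (fun t : ℝ => f (x + t • (y - x))) ⟪gradient f x, y - x⟫ 0 := by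
    simpa using (show DifferentiableAt ℝ f (x + (0 : ℝ) • (y - x)) by simpa using hf)
      |>.hasDerivAt_comp_add_smul
  have := hφ.le_slope_of_hasDerivAt (Set.mem_univ 0) (Set.mem_univ 1) one_pos hderiv
  simp only [slope_def_field, zero_smul, add_zero, one_smul, add_sub_cancel, sub_zero,
    div_one] at this
  linarith

theorem GradientLipschitzWith.le_add_inner_gradient_add_sq {Λ : ℝ} {f : E → ℝ}
    (hL : GradientLipschitzWith Λ f) (hf : Differentiable ℝ f) (x v : E) :
    f (x + v) ≤ f x + ⟪gradient f x, v⟫ + Λ / 2 * ‖v‖ ^ 2 := by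
  have hφ : ∀ t : ℝ, HasDerivAt (fun s : ℝ => f (x + s • v) - s * ⟪gradient f x, v⟫)
      (⟪gradient f (x + t • v), v⟫ - ⟪gradient f x, v⟫) t := fun t => by
    simpa using (hf _).hasDerivAt_comp_add_smul.fun_sub ((hasDerivAt_id t).mul_const _)
  have hB : ∀ t : ℝ, HasDerivAt (fun s : ℝ => f x + Λ / 2 * ‖v‖ ^ 2 * s ^ 2)
      (Λ * ‖v‖ ^ 2 * t) t := fun t => by
    refine (((hasDerivAt_pow 2 t).const_mul (Λ / 2 * ‖v‖ ^ 2)).const_add (f x)).congr_deriv ?_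
    norm_num
    ring
  have hbound : ∀ t ∈ Set.Ico (0 : ℝ) 1,
      ⟪gradient f (x + t • v), v⟫ - ⟪gradient f x, v⟫ ≤ Λ * ‖v‖ ^ 2 * t := by
    rintro t ⟨ht, -⟩
    calc ⟪gradient f (x + t • v), v⟫ - ⟪gradient f x, v⟫
        = ⟪gradient f (x + t • v) - gradient f x, v⟫ := (inner_sub_left _ _ _).symm
      _ ≤ ‖gradient f (x + t • v) - gradient f x‖ * ‖v‖ := real_inner_le_norm _ _
      _ ≤ Λ * ‖x + t • v - x‖ * ‖v‖ := by gcongr; exact hL _ _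
      _ = Λ * ‖v‖ ^ 2 * t := by
        rw [add_sub_cancel_left, norm_smul, Real.norm_of_nonneg ht]; ring
  have := image_le_of_deriv_right_le_deriv_boundary
    (fun t _ => (hφ t).continuousAt.continuousWithinAt) (fun t _ => (hφ t).hasDerivWithinAt)
    (by simp) (fun t _ => (hB t).continuousAt.continuousWithinAt)
    (fun t _ => (hB t).hasDerivWithinAt) hbound (Set.right_mem_Icc.2 zero_le_one)
  simp only [one_smul, one_mul, one_pow, mul_one] at this
  linarith

theorem GradientLipschitzWith.norm_sub_sq_le_of_convexOn {Λ : ℝ} {f : E → ℝ}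
    (hL : GradientLipschitzWith Λ f) (hf : Differentiable ℝ f) (hc : ConvexOn ℝ Set.univ f)
    (x y : E) :
    ‖gradient f x - gradient f y‖ ^ 2 ≤ 2 * Λ * (f x - f y - ⟪gradient f y, x - y⟫) := by
  rcases le_or_gt Λ 0 with hΛ | hΛ
  · have hzero : Λ * ‖x - y‖ = 0 := le_antisymm
      (mul_nonpos_of_nonpos_of_nonneg hΛ (norm_nonneg _)) ((norm_nonneg _).trans (hL y x))
    have hgrad : ‖gradient f x - gradient f y‖ = 0 :=
      le_antisymm (hzero ▸ hL y x) (norm_nonneg _)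
    rcases mul_eq_zero.1 hzero with rfl | hxy
    · simp [hgrad]
    · simp [sub_eq_zero.1 (norm_eq_zero.1 hxy)]
  set u := gradient f x - gradient f y
  -- a gradient step of length `Λ⁻¹` from `x` against `u`, estimated from above by smoothness
  -- and from below by convexity at `y`
  have hdesc := hL.le_add_inner_gradient_add_sq hf x (-(Λ⁻¹ • u))
  have hconv := hc.add_inner_gradient_le (hf y) (x + -(Λ⁻¹ • u))
  have hu : ⟪gradient f x, u⟫ - ⟪gradient f y, u⟫ = ‖u‖ ^ 2 := by
    rw [← inner_sub_left, real_inner_self_eq_norm_sq]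
  rw [inner_neg_right, real_inner_smul_right, norm_neg, norm_smul, Real.norm_of_nonneg
    (inv_nonneg.2 hΛ.le)] at hdesc
  rw [add_sub_right_comm, ← sub_eq_add_neg, inner_sub_right, real_inner_smul_right] at hconv
  have key : ‖u‖ ^ 2 / (2 * Λ) ≤ f x - f y - ⟪gradient f y, x - y⟫ := by
    have : ‖u‖ ^ 2 / (2 * Λ) = Λ⁻¹ * ‖u‖ ^ 2 - Λ / 2 * (Λ⁻¹ * ‖u‖) ^ 2 := by
      field_simp; ring
    rw [this, ← hu]
    linarith
  rwa [div_le_iff₀ (by positivity), mul_comm] at key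

theorem GradientLipschitzWith.norm_gradient_sq_le_of_convexOn {Λ : ℝ} {f : E → ℝ}
    (hL : GradientLipschitzWith Λ f) (hf : Differentiable ℝ f) (hc : ConvexOn ℝ Set.univ f)
    (x y : E) :
    ‖gradient f x‖ ^ 2 ≤ 4 * Λ * (f x - f y - ⟪gradient f y, x - y⟫) + 2 * ‖gradient f y‖ ^ 2 := by
  have hpar := parallelogram_law_with_norm ℝ (gradient f x - gradient f y) (gradient f y)
  rw [sub_add_cancel] at hpar
  nlinarith [hL.norm_sub_sq_le_of_convexOn hf hc x y,
    sq_nonneg ‖gradient f x - gradient f y - gradient f y‖]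

theorem sum_norm_gradient_sq_le {ι : Type*} (s : Finset ι) {Λ : ℝ} {f : ι → E → ℝ}
    (hL : ∀ i ∈ s, GradientLipschitzWith Λ (f i)) (hf : ∀ i ∈ s, Differentiable ℝ (f i))
    (hc : ∀ i ∈ s, ConvexOn ℝ Set.univ (f i)) {x y : E}
    (hy : ∑ i ∈ s, gradient (f i) y = 0) :
    ∑ i ∈ s, ‖gradient (f i) x‖ ^ 2
      ≤ 4 * Λ * (∑ i ∈ s, f i x - ∑ i ∈ s, f i y) + 2 * ∑ i ∈ s, ‖gradient (f i) y‖ ^ 2 := by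
  have hlin : ∑ i ∈ s, (f i x - f i y - ⟪gradient (f i) y, x - y⟫)
      = ∑ i ∈ s, f i x - ∑ i ∈ s, f i y := by
    rw [sum_sub_distrib, sum_sub_distrib, ← sum_inner, hy, inner_zero_left, sub_zero]
  calc ∑ i ∈ s, ‖gradient (f i) x‖ ^ 2
      ≤ ∑ i ∈ s, (4 * Λ * (f i x - f i y - ⟪gradient (f i) y, x - y⟫)
          + 2 * ‖gradient (f i) y‖ ^ 2) :=
        sum_le_sum fun i hi => (hL i hi).norm_gradient_sq_le_of_convexOn (hf i hi) (hc i hi) x y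
    _ = _ := by rw [sum_add_distrib, ← mul_sum, ← mul_sum, hlin]

theorem IsLocalMin.hasGradientAt_eq_zero {f : E → ℝ} {x g : E} (hmin : IsLocalMin f x)
    (hg : HasGradientAt f g x) : g = 0 := by
  rw [← hg.gradient]
  simp [gradient, hmin.fderiv_eq_zero]

theorem hasGradientAt_const_mul_sum {ι : Type*} (s : Finset ι) (c : ℝ) {f : ι → E → ℝ} {x : E}
    (hf : ∀ i ∈ s, DifferentiableAt ℝ (f i) x) :
    HasGradientAt (fun y => c * ∑ i ∈ s, f i y) (c • ∑ i ∈ s, gradient (f i) x) x := by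
  rw [hasGradientAt_iff_hasFDerivAt, map_smul, map_sum]
  exact (HasFDerivAt.fun_sum fun i hi => (hf i hi).hasGradientAt.hasFDerivAt).const_mul c

end Smooth

section Sampling

variable {ι : Type*} [DecidableEq ι]

theorem card_filter_mem_powersetCard_mul (s : Finset ι) (b : ℕ) {i : ι} (hi : i ∈ s) :
    #{S ∈ powersetCard b s | i ∈ S} * #s = b * (#s).choose b := by
  obtain ⟨m, hm⟩ : ∃ m, #s = m + 1 := Nat.exists_eq_add_one.2 (card_pos.2 ⟨i, hi⟩)
  rcases b with _ | k
  · simp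
  have hcount := card_filter_powersetCard_subset {i} s (k + 1) (singleton_subset_iff.2 hi)
    (by simp)
  simp only [singleton_subset_iff, card_singleton, hm] at hcount
  rw [hcount, hm, add_tsub_cancel_right, add_tsub_cancel_right, mul_comm,
    Nat.add_one_mul_choose_eq, mul_comm]

theorem card_filter_mem_mem_powersetCard_mul (s : Finset ι) (b : ℕ) {i j : ι} (hi : i ∈ s)
    (hj : j ∈ s) (hij : i ≠ j) :
    #{S ∈ powersetCard b s | i ∈ S ∧ j ∈ S} * (#s * (#s - 1)) = b * (b - 1) * (#s).choose b := by
  have hpair : #({i, j} : Finset ι) = 2 := card_pair hij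
  have hsub : {i, j} ⊆ s := insert_subset_iff.2 ⟨hi, singleton_subset_iff.2 hj⟩
  obtain ⟨m, hm⟩ : ∃ m, #s = m + 2 := ⟨#s - 2, by have := hpair ▸ card_le_card hsub; omega⟩
  obtain hb | ⟨k, rfl⟩ : b < 2 ∨ ∃ k, b = k + 2 := by
    rcases lt_or_ge b 2 with h | h
    exacts [.inl h, .inr ⟨b - 2, by omega⟩]
  · have hempty : {S ∈ powersetCard b s | i ∈ S ∧ j ∈ S} = ∅ := by
      refine filter_eq_empty_iff.2 fun S hS ⟨hi, hj⟩ => ?_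
      have := one_lt_card.2 ⟨i, hi, j, hj, hij⟩
      rw [(mem_powersetCard.1 hS).2] at this
      omega
    interval_cases b <;> simp [hempty]
  have hcount := card_filter_powersetCard_subset {i, j} s (k + 2) hsub (by omega)
  simp only [insert_subset_iff, singleton_subset_iff, hpair, hm] at hcount
  rw [hcount, hm, add_tsub_cancel_right, add_tsub_cancel_right, show m + 2 - 1 = m + 1 by omega,
    show k + 2 - 1 = k + 1 by omega]
  have h1 := Nat.add_one_mul_choose_eq (m + 1) (k + 1)
  have h2 := Nat.add_one_mul_choose_eq m k
  calc m.choose k * ((m + 2) * (m + 1))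
      = (m + 2) * ((m + 1) * m.choose k) := by ring
    _ = (k + 2) * (k + 1) * (m + 2).choose (k + 2) := by rw [h2, ← mul_assoc, h1]; ring

variable {E : Type*} [NormedAddCommGroup E] [InnerProductSpace ℝ E]

theorem sum_powersetCard_norm_sum_sq (s : Finset ι) (b : ℕ) (g : ι → E) :
    ∑ S ∈ powersetCard b s, ‖∑ i ∈ S, g i‖ ^ 2
      = ∑ i ∈ s, ∑ j ∈ s, (#{S ∈ powersetCard b s | i ∈ S ∧ j ∈ S} : ℝ) * ⟪g i, g j⟫ := by
  simp_rw [← real_inner_self_eq_norm_sq, sum_inner, inner_sum, card_filter, Nat.cast_sum,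
    sum_mul, Nat.cast_ite, ite_mul, Nat.cast_one, Nat.cast_zero, one_mul, zero_mul]
  conv_rhs => enter [2, i]; rw [sum_comm]
  rw [sum_comm]
  refine sum_congr rfl fun S hS => ?_
  have hSs := (mem_powersetCard.1 hS).1
  simp only [ite_and, sum_ite_irrel, sum_const_zero, sum_ite_mem, inter_eq_right.2 hSs]

theorem mul_sum_powersetCard_norm_sum_sq (s : Finset ι) (b : ℕ) (g : ι → E) :
    (#s * (#s - 1) : ℝ) * ∑ S ∈ powersetCard b s, ‖∑ i ∈ S, g i‖ ^ 2
      = b * (#s).choose b * ((#s - b) * ∑ i ∈ s, ‖g i‖ ^ 2 + (b - 1) * ‖∑ i ∈ s, g i‖ ^ 2) := by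
  have hcount : ∀ i ∈ s, ∀ j ∈ s,
      (#s * (#s - 1) : ℝ) * #{S ∈ powersetCard b s | i ∈ S ∧ j ∈ S}
        = b * (#s).choose b * ((#s - b) * (if i = j then 1 else 0) + (b - 1)) := by
    intro i hi j hj
    have hs : 1 ≤ #s := card_pos.2 ⟨i, hi⟩
    split_ifs with hij
    · subst hij
      have h := card_filter_mem_powersetCard_mul s b hi
      simp only [and_self]
      rw [← Nat.cast_inj (R := ℝ)] at h
      push_cast at h
      linear_combination (#s - 1 : ℝ) * h
    · have h := card_filter_mem_mem_powersetCard_mul s b hi hj hij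
      have hb : (b : ℝ) * ((b - 1 : ℕ) : ℝ) = b * (b - 1) := by cases b <;> simp
      rw [← Nat.cast_inj (R := ℝ)] at h
      simp only [Nat.cast_mul, Nat.cast_sub hs, Nat.cast_one, hb] at h
      linear_combination h
  have hdiag : ∑ i ∈ s, ∑ j ∈ s, (if i = j then 1 else 0) * ⟪g i, g j⟫ = ∑ i ∈ s, ‖g i‖ ^ 2 := by
    simp [ite_mul]
  have hall : ∑ i ∈ s, ∑ j ∈ s, ⟪g i, g j⟫ = ‖∑ i ∈ s, g i‖ ^ 2 := by
    simp_rw [← real_inner_self_eq_norm_sq, sum_inner, inner_sum]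
  rw [sum_powersetCard_norm_sum_sq, ← hdiag, ← hall]
  simp only [mul_sum, ← sum_add_distrib]
  refine sum_congr rfl fun i hi => sum_congr rfl fun j hj => ?_
  rw [← mul_assoc, hcount i hi j hj]
  ring

theorem sum_powersetCard_norm_smul_sum_sq_div_choose (s : Finset ι) {b : ℕ} (hs : 2 ≤ #s)
    (hb : 1 ≤ b) (hbs : b ≤ #s) (g : ι → E) :
    (∑ S ∈ powersetCard b s, ‖(b : ℝ)⁻¹ • ∑ i ∈ S, g i‖ ^ 2) / (#s).choose b
      = (#s - b) / (b * (#s - 1)) * ((∑ i ∈ s, ‖g i‖ ^ 2) / #s)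
        + (1 - (#s - b) / (b * (#s - 1))) * ‖(#s : ℝ)⁻¹ • ∑ i ∈ s, g i‖ ^ 2 := by
  have hs1 : (1 : ℝ) < #s := by exact_mod_cast hs
  have hs1' : (#s : ℝ) - 1 ≠ 0 := by linarith
  have hb0 : (0 : ℝ) < b := by exact_mod_cast hb
  have hC : (0 : ℝ) < (#s).choose b := by exact_mod_cast Nat.choose_pos hbs
  have hsum : ∑ S ∈ powersetCard b s, ‖∑ i ∈ S, g i‖ ^ 2
      = b * (#s).choose b * ((#s - b) * ∑ i ∈ s, ‖g i‖ ^ 2 + (b - 1) * ‖∑ i ∈ s, g i‖ ^ 2)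
        / (#s * (#s - 1)) := by
    rw [eq_div_iff (by positivity), mul_comm, mul_sum_powersetCard_norm_sum_sq]
  simp_rw [norm_smul, mul_pow, ← mul_sum, norm_inv, Real.norm_natCast, hsum]
  field_simp
  ring

theorem sub_div_mul_sub_one_mem_Icc {n b : ℝ} (hn : 1 < n) (hb : 1 ≤ b) (hbn : b ≤ n) :
    (n - b) / (b * (n - 1)) ∈ Set.Icc 0 1 :=
  ⟨div_nonneg (by linarith) (by nlinarith), (div_le_one (by nlinarith)).2 (by nlinarith)⟩

end Sampling

theorem stmt4 (d n b : ℕ) (hn : 2 ≤ n) (hb1 : 1 ≤ b) (hbn : b ≤ n)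
    (Λ : ℝ)
    (f : Fin n → EuclideanSpace ℝ (Fin d) → ℝ)
    (hdiff : ∀ i, Differentiable ℝ (f i))
    (hconv : ∀ i, ConvexOn ℝ Set.univ (f i))
    (hsmooth : ∀ i, ∀ w w' : EuclideanSpace ℝ (Fin d),
      ‖gradient (f i) w' - gradient (f i) w‖ ≤ Λ * ‖w' - w‖)
    (F : EuclideanSpace ℝ (Fin d) → ℝ) (hF : ∀ w, F w = (n : ℝ)⁻¹ * ∑ i, f i w)
    (wstar : EuclideanSpace ℝ (Fin d)) (hmin : ∀ w, F wstar ≤ F w)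
    (β N : ℝ) (hβ : β = ((n : ℝ) - b) / (b * ((n : ℝ) - 1)))
    (hN : N = 2 / (n : ℝ) * ∑ i, ‖gradient (f i) wstar‖ ^ 2)
    (w : EuclideanSpace ℝ (Fin d)) :
    (∑ S ∈ Finset.powersetCard b (Finset.univ : Finset (Fin n)),
        ‖(b : ℝ)⁻¹ • ∑ i ∈ S, gradient (f i) w‖ ^ 2) / (n.choose b : ℝ)
      ≤ 4 * β * Λ * (F w - F wstar) + 2 * ‖gradient F w‖ ^ 2 + N := by
  have hn0 : (0 : ℝ) < n := by positivity
  have hgradF : ∀ u, HasGradientAt F ((n : ℝ)⁻¹ • ∑ i, gradient (f i) u) u := fun u =>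
    funext hF ▸ hasGradientAt_const_mul_sum univ _ fun i _ => (hdiff i).differentiableAt
  have hstar : ∑ i, gradient (f i) wstar = 0 := by
    have := (show IsLocalMin F wstar from .of_forall hmin).hasGradientAt_eq_zero (hgradF wstar)
    exact (smul_eq_zero.1 this).resolve_left (inv_ne_zero hn0.ne')
  have hmean : (∑ i, ‖gradient (f i) w‖ ^ 2) / n ≤ 4 * Λ * (F w - F wstar) + N := by
    have hsq := sum_norm_gradient_sq_le univ (fun i _ => hsmooth i) (fun i _ => hdiff i)
      (fun i _ => hconv i) (x := w) hstar
    simp only [hF, ← mul_sub, hN] at hsq ⊢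
    rw [div_le_iff₀ hn0]
    field_simp at hsq ⊢
    linarith
  have hexp := sum_powersetCard_norm_smul_sum_sq_div_choose univ (by simpa using hn)
    hb1 (by simpa using hbn) fun i => gradient (f i) w
  simp only [card_univ, Fintype.card_fin] at hexp
  obtain ⟨hβ0, hβ1⟩ := hβ ▸ sub_div_mul_sub_one_mem_Icc (n := n) (b := b) (by exact_mod_cast hn)
    (by exact_mod_cast hb1) (by exact_mod_cast hbn)
  have hN0 : 0 ≤ N := hN ▸ by positivity
  rw [hexp, ← hβ, ← (hgradF w).gradient]
  calc β * ((∑ i, ‖gradient (f i) w‖ ^ 2) / n) + (1 - β) * ‖gradient F w‖ ^ 2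
      ≤ β * (4 * Λ * (F w - F wstar) + N) + 2 * ‖gradient F w‖ ^ 2 := by
        gcongr
        nlinarith [sq_nonneg ‖gradient F w‖]
    _ ≤ 4 * β * Λ * (F w - F wstar) + 2 * ‖gradient F w‖ ^ 2 + N := by
        nlinarith [mul_le_mul_of_nonneg_right hβ1 hN0]
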